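/- Let a = −1 and let f : ℝ → ℝ be differentiable. Then the Fréchet derivative (Jacobian matrix) of V_{−1,f} at the point (0,0,1) is [[−2, −f(0), 0], [f(0), −2, 0], [0, 0, 4]], with determinant 4(4 + f(0)²) > 0, and the Jacobian at (0,0,−1) is [[2, −f(0), 0], [f(0), 2, 0], [0, 0, −4]], with determinant −4(4 + f(0)²) < 0. In particular, both zeros of V_{−1,f} are nondegenerate. -/

import Mathlib

/-- `H_a(x,y,z) = (x² + y²)(x² + y² + z² + a)`. -/
noncomputable def Ha3 (a : ℝ) : ℝ × ℝ × ℝ → ℝ :=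
  fun p => (p.1 ^ 2 + p.2.1 ^ 2) * (p.1 ^ 2 + p.2.1 ^ 2 + p.2.2 ^ 2 + a)

/-- The vortex-plug vector field
`V_{a,f}(x,y,z) = (−2xz − f(H_a)·y, −2yz + f(H_a)·x, 2(2(x²+y²)+z²+a))`. -/
noncomputable def Vaf (a : ℝ) (f : ℝ → ℝ) : ℝ × ℝ × ℝ → ℝ × ℝ × ℝ :=
  fun p =>
    (-2 * p.1 * p.2.2 - f (Ha3 a p) * p.2.1,
      -2 * p.2.1 * p.2.2 + f (Ha3 a p) * p.1,
      2 * (2 * (p.1 ^ 2 + p.2.1 ^ 2) + p.2.2 ^ 2 + a))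

/-!
On the `z`-axis the factor `x² + y²` of `H_a` vanishes together with its derivative, so `H_a` has
a critical zero there and the derivative of `f ∘ H_a` vanishes; only the value `f 0` survives, as
the coefficient of the rotation `(x, y) ↦ (-y, x)`. The Jacobian of `V_{a,f}` at `(0, 0, z)` is
therefore a rotation-dilation `[[-2z, -f 0], [f 0, -2z]]` of the `(x, y)`-plane, with determinant
`4z² + f(0)² > 0`, times `4z` on the `z`-axis; for `z ≠ 0` it is injective, hence invertible.
-/

open ContinuousLinearMap

noncomputable def axisJacobian (c z : ℝ) : (ℝ × ℝ × ℝ) →L[ℝ] ℝ × ℝ × ℝ :=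
  ((-2 * z) • fst ℝ ℝ (ℝ × ℝ) - c • (fst ℝ ℝ ℝ).comp (snd ℝ ℝ (ℝ × ℝ))).prod
    ((c • fst ℝ ℝ (ℝ × ℝ) - (2 * z) • (fst ℝ ℝ ℝ).comp (snd ℝ ℝ (ℝ × ℝ))).prod
      ((4 * z) • (snd ℝ ℝ ℝ).comp (snd ℝ ℝ (ℝ × ℝ))))

@[simp]
lemma axisJacobian_apply (c z : ℝ) (q : ℝ × ℝ × ℝ) :
    axisJacobian c z q = (-2 * z * q.1 - c * q.2.1, c * q.1 - 2 * z * q.2.1, 4 * z * q.2.2) := by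
  simp [axisJacobian, mul_assoc]

lemma axisJacobian_injective (c : ℝ) {z : ℝ} (hz : z ≠ 0) :
    Function.Injective (axisJacobian c z) := by
  refine (injective_iff_map_eq_zero _).2 fun q hq => ?_
  simp only [axisJacobian_apply, Prod.mk_eq_zero] at hq
  obtain ⟨h₁, h₂, h₃⟩ := hq
  have hdet : 4 * z ^ 2 + c ^ 2 ≠ 0 := by positivity
  -- the adjugate of the `(x, y)`-block `[[-2z, -c], [c, -2z]]` supplies the coefficients
  have hx : (4 * z ^ 2 + c ^ 2) * q.1 = 0 := by linear_combination (-2 * z) * h₁ + c * h₂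
  have hy : (4 * z ^ 2 + c ^ 2) * q.2.1 = 0 := by linear_combination (-c) * h₁ - 2 * z * h₂
  have hz' : q.2.2 = 0 := by simpa [hz] using h₃
  exact Prod.ext (by simpa [hdet] using hx) (Prod.ext (by simpa [hdet] using hy) hz')

lemma isUnit_axisJacobian (c : ℝ) {z : ℝ} (hz : z ≠ 0) : IsUnit (axisJacobian c z) :=
  have hinj := axisJacobian_injective c hz
  (axisJacobian c z).isUnit_iff_bijective.2 ⟨hinj, LinearMap.injective_iff_surjective.1 hinj⟩

lemma hasFDerivAt_radiusSq_axis (z : ℝ) :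
    HasFDerivAt (fun p : ℝ × ℝ × ℝ => p.1 ^ 2 + p.2.1 ^ 2) (0 : (ℝ × ℝ × ℝ) →L[ℝ] ℝ) (0, 0, z) := by
  have hx := (hasFDerivAt_fst (𝕜 := ℝ) (p := ((0 : ℝ), (0 : ℝ), z))).pow 2
  have hy := (hasFDerivAt_snd (𝕜 := ℝ) (p := ((0 : ℝ), (0 : ℝ), z))).fst.pow 2
  simpa using hx.fun_add hy

lemma hasFDerivAt_Ha3_axis (a z : ℝ) :
    HasFDerivAt (Ha3 a) (0 : (ℝ × ℝ × ℝ) →L[ℝ] ℝ) (0, 0, z) :=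
  have hr := hasFDerivAt_radiusSq_axis z
  have hz := (hasFDerivAt_snd (𝕜 := ℝ) (p := ((0 : ℝ), (0 : ℝ), z))).snd.pow 2
  (hr.fun_mul ((hr.fun_add hz).add_const a)).congr_fderiv (by simp)

lemma hasFDerivAt_Vaf_axis (a z : ℝ) {f : ℝ → ℝ} (hf : DifferentiableAt ℝ f 0) :
    HasFDerivAt (Vaf a f) (axisJacobian (f 0) z) (0, 0, z) := by
  have hx : HasFDerivAt (fun p : ℝ × ℝ × ℝ => p.1) (fst ℝ ℝ (ℝ × ℝ)) (0, 0, z) := hasFDerivAt_fst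
  have hy : HasFDerivAt (fun p : ℝ × ℝ × ℝ => p.2.1)
      ((fst ℝ ℝ ℝ).comp (snd ℝ ℝ (ℝ × ℝ))) (0, 0, z) := hasFDerivAt_snd.fst
  have hz : HasFDerivAt (fun p : ℝ × ℝ × ℝ => p.2.2)
      ((snd ℝ ℝ ℝ).comp (snd ℝ ℝ (ℝ × ℝ))) (0, 0, z) := hasFDerivAt_snd.snd
  have hf' : DifferentiableAt ℝ f (Ha3 a (0, 0, z)) := by simpa [Ha3] using hf
  have hfH : HasFDerivAt (fun p => f (Ha3 a p)) (0 : (ℝ × ℝ × ℝ) →L[ℝ] ℝ) (0, 0, z) :=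
    (hf'.hasFDerivAt.comp _ (hasFDerivAt_Ha3_axis a z)).congr_fderiv (by simp)
  have hr := hasFDerivAt_radiusSq_axis z
  refine HasFDerivAt.congr_fderiv
    ((((hx.const_mul (-2)).fun_mul hz).fun_sub (hfH.fun_mul hy)).prodMk
      ((((hy.const_mul (-2)).fun_mul hz).fun_add (hfH.fun_mul hx)).prodMk
        ((((hr.const_mul 2).fun_add (hz.pow 2)).add_const a).const_mul 2))) ?_
  ext <;> simp [Ha3] <;> ring

/-- For `a = −1` and differentiable `f`, the Fréchet derivative of `V_{−1,f}` at `(0,0,1)`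
is given by the matrix `[[−2, −f(0), 0], [f(0), −2, 0], [0, 0, 4]]` with determinant
`4(4 + f(0)²) > 0`, and at `(0,0,−1)` by `[[2, −f(0), 0], [f(0), 2, 0], [0, 0, −4]]` with
determinant `−4(4 + f(0)²) < 0`; in particular both zeros are nondegenerate. -/
theorem stmt11 (f : ℝ → ℝ) (hf : Differentiable ℝ f) :
    (∀ q : ℝ × ℝ × ℝ,
      fderiv ℝ (Vaf (-1) f) ((0 : ℝ), (0 : ℝ), (1 : ℝ)) q =
        (-2 * q.1 - f 0 * q.2.1, f 0 * q.1 - 2 * q.2.1, 4 * q.2.2)) ∧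
    Matrix.det !![(-2 : ℝ), -f 0, 0; f 0, -2, 0; 0, 0, 4] = 4 * (4 + f 0 ^ 2) ∧
    0 < 4 * (4 + f 0 ^ 2) ∧
    (∀ q : ℝ × ℝ × ℝ,
      fderiv ℝ (Vaf (-1) f) ((0 : ℝ), (0 : ℝ), (-1 : ℝ)) q =
        (2 * q.1 - f 0 * q.2.1, f 0 * q.1 + 2 * q.2.1, -4 * q.2.2)) ∧
    Matrix.det !![(2 : ℝ), -f 0, 0; f 0, 2, 0; 0, 0, -4] = -4 * (4 + f 0 ^ 2) ∧
    -4 * (4 + f 0 ^ 2) < 0 ∧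
    IsUnit (fderiv ℝ (Vaf (-1) f) ((0 : ℝ), (0 : ℝ), (1 : ℝ))) ∧
    IsUnit (fderiv ℝ (Vaf (-1) f) ((0 : ℝ), (0 : ℝ), (-1 : ℝ))) := by
  have hup := (hasFDerivAt_Vaf_axis (-1) 1 (hf 0)).fderiv
  have hdown := (hasFDerivAt_Vaf_axis (-1) (-1) (hf 0)).fderiv
  refine ⟨fun q => ?_, ?_, by positivity, fun q => ?_, ?_, by linarith [sq_nonneg (f 0)],
    hup ▸ isUnit_axisJacobian _ one_ne_zero, hdown ▸ isUnit_axisJacobian _ (by norm_num)⟩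
  · rw [hup, axisJacobian_apply]
    ring_nf
  · simp [Matrix.det_fin_three]
    ring
  · rw [hdown, axisJacobian_apply]
    ring_nf
  · simp [Matrix.det_fin_three]
    ring
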